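/- Let m be a positive integer and x a real number. For every n ≥ 0, the Hankel determinant of the Eulerian-Dowling polynomials satisfies det( (𝓐_m(i+j, x))_{0 ≤ i,j ≤ n} ) = (m(x−1)+1)^{C(n+1,2)} · ∏_{k=0}^n (k!)^2, where C(n+1,2) = n(n+1)/2. -/

import Mathlib

/-!
The numbers `T(n,k) = k! W_m(n,k) (x-1)^(n-k)` satisfy the bidiagonal recurrence
`T(n+1,k) = k T(n,k-1) + (a k + b) T(n,k)` with `a = m(x-1)`, `b = x-1`, and `𝓐_m(n,x)` is the
row sum `∑ₖ T(n,k)`. If `K` is the matrix of this recurrence, then `T(n,·) = Kⁿ e₀`, so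
`𝓐_m(i+j,x) = (𝟙ᵀ Kⁱ)(Kʲ e₀)`. The row vector `𝟙ᵀ Kⁱ` is `k ↦ Pᵢ(k)` for a polynomial `Pᵢ` of
degree at most `i` whose `i`-th coefficient is `(a+1)^i`. Hence the Hankel matrix is the lower
triangular matrix `(T(i,k))`, with diagonal `k!`, times the matrix `(Pⱼ(k))`, which is a
Vandermonde matrix at `0, …, n` times an upper triangular coefficient matrix.
-/

/-- Whitney numbers of the second kind:
`W_m(n,k) = (1/(m^k k!)) ∑_{i=0}^k (−1)^{k−i} C(k,i) (mi+1)^n`. -/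
noncomputable def whitney2 (m n k : ℕ) : ℝ :=
  (1 / ((m : ℝ) ^ k * k.factorial)) *
    ∑ i ∈ Finset.range (k + 1), (-1 : ℝ) ^ (k - i) * (k.choose i) * ((m : ℝ) * i + 1) ^ n

/-- Eulerian–Dowling polynomials `𝓐_m(n,x) = ∑_{k=0}^n k!·W_m(n,k)·(x−1)^{n−k}`. -/
noncomputable def eulerianDowling (m n : ℕ) (x : ℝ) : ℝ :=
  ∑ k ∈ Finset.range (n + 1), (k.factorial : ℝ) * whitney2 m n k * (x - 1) ^ (n - k)

open Finset Polynomial Nat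

theorem Matrix.det_eval_matrixOfPolynomials_eq_det_vandermonde_mul {R : Type*} [CommRing R]
    {n : ℕ} (v : Fin n → R) (p : Fin n → R[X]) (h_deg : ∀ i, (p i).natDegree ≤ i) :
    (Matrix.of fun i j => (p j).eval (v i)).det =
      (Matrix.vandermonde v).det * ∏ i, (p i).coeff i := by
  rw [eval_matrixOfPolynomials_eq_vandermonde_mul_matrixOfPolynomials v p h_deg, det_mul,
    det_of_isUpperTriangular (matrixOfPolynomials_blockTriangular p h_deg)]
  rfl

theorem Fin.prod_pow_val_eq_pow_choose_two {M : Type*} [CommMonoid M] (c : M) (n : ℕ) :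
    ∏ i : Fin n, c ^ (i : ℕ) = c ^ n.choose 2 := by
  rw [prod_pow_eq_pow_sum, Fin.sum_univ_eq_sum_range (fun i => i), sum_range_id,
    Nat.choose_two_right]

theorem Polynomial.coeff_taylor_of_natDegree_le {R : Type*} [Semiring R] {f : R[X]} {n : ℕ}
    (r : R) (h : f.natDegree ≤ n) : (taylor r f).coeff n = f.coeff n := by
  rcases Nat.lt_or_eq_of_le h with h | rfl
  · rw [coeff_eq_zero_of_natDegree_lt h,
      coeff_eq_zero_of_natDegree_lt ((natDegree_taylor f r).trans_lt h)]
  · exact coeff_taylor_natDegree r f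

section DowlingTriangle

variable {R : Type*} [CommRing R] (a b : R)

def dowlingTriangle : ℕ → ℕ → R
  | 0, k => if k = 0 then 1 else 0
  | n + 1, k => k * dowlingTriangle n (k - 1) + (a * k + b) * dowlingTriangle n k

def dowlingRowSum (n : ℕ) : R :=
  ∑ k ∈ range (n + 1), dowlingTriangle a b n k

noncomputable def dowlingDualPoly : ℕ → R[X]
  | 0 => 1
  | i + 1 => (X + 1) * taylor 1 (dowlingDualPoly i) + (C a * X + C b) * dowlingDualPoly i

theorem dowlingTriangle_eq_zero_of_lt {n k : ℕ} (h : n < k) : dowlingTriangle a b n k = 0 := by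
  induction n generalizing k with
  | zero => simp [dowlingTriangle, h.ne']
  | succ n ih => simp [dowlingTriangle, ih (by omega : n < k - 1), ih (by omega : n < k)]

theorem dowlingTriangle_self (n : ℕ) : dowlingTriangle a b n n = n ! := by
  induction n with
  | zero => simp [dowlingTriangle]
  | succ n ih =>
    simp [dowlingTriangle, ih, dowlingTriangle_eq_zero_of_lt a b (Nat.lt_succ_self n),
      Nat.factorial_succ]

theorem sum_range_dowlingTriangle_of_lt {n N : ℕ} (h : n < N) :
    ∑ k ∈ range N, dowlingTriangle a b n k = dowlingRowSum a b n := by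
  refine (sum_subset (range_subset_range.2 h) fun k _ hk => ?_).symm
  exact dowlingTriangle_eq_zero_of_lt a b (by simpa using hk)

theorem eval_dowlingDualPoly_succ (i : ℕ) (y : R) :
    (dowlingDualPoly a b (i + 1)).eval y =
      (y + 1) * (dowlingDualPoly a b i).eval (y + 1) +
        (a * y + b) * (dowlingDualPoly a b i).eval y := by
  simp [dowlingDualPoly, taylor_eval]

theorem natDegree_dowlingDualPoly_le (i : ℕ) : (dowlingDualPoly a b i).natDegree ≤ i := by
  induction i with
  | zero => simp [dowlingDualPoly]
  | succ i ih =>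
    have h1 : (X + 1 : R[X]).natDegree ≤ 1 := by compute_degree
    refine natDegree_add_le_of_degree_le ?_ ?_
    · rw [add_comm i]
      exact natDegree_mul_le_of_le h1 ((natDegree_taylor _ _).trans_le ih)
    · rw [add_comm i]
      exact natDegree_mul_le_of_le natDegree_linear_le ih

theorem coeff_dowlingDualPoly_self (i : ℕ) : (dowlingDualPoly a b i).coeff i = (a + 1) ^ i := by
  induction i with
  | zero => simp [dowlingDualPoly]
  | succ i ih =>
    have hdeg := natDegree_dowlingDualPoly_le a b i
    have hlt := hdeg.trans_lt (Nat.lt_succ_self i)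
    simp only [dowlingDualPoly, coeff_add, add_mul, mul_assoc, coeff_X_mul, one_mul, coeff_C_mul,
      coeff_taylor_of_natDegree_le 1 hdeg, coeff_eq_zero_of_natDegree_lt hlt,
      coeff_eq_zero_of_natDegree_lt ((natDegree_taylor _ _).trans_lt hlt), ih]
    ring

theorem sum_range_succ_mul_dowlingTriangle_succ (f : ℕ → R) {j N : ℕ} (hj : j < N) :
    ∑ k ∈ range (N + 1), f k * dowlingTriangle a b (j + 1) k =
      ∑ k ∈ range (N + 1), (((k : R) + 1) * f (k + 1) + (a * k + b) * f k) *
        dowlingTriangle a b j k := by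
  have hshift : ∑ k ∈ range (N + 1), f k * ((k : R) * dowlingTriangle a b j (k - 1)) =
      ∑ k ∈ range (N + 1), ((k : R) + 1) * f (k + 1) * dowlingTriangle a b j k := by
    rw [sum_range_succ', sum_range_succ _ N, dowlingTriangle_eq_zero_of_lt a b hj]
    simp only [Nat.cast_add, Nat.cast_one, add_tsub_cancel_right, Nat.cast_zero, zero_mul,
      mul_zero, add_zero]
    exact sum_congr rfl fun k _ => by ring
  calc ∑ k ∈ range (N + 1), f k * dowlingTriangle a b (j + 1) k
      = ∑ k ∈ range (N + 1), (f k * ((k : R) * dowlingTriangle a b j (k - 1)) +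
          (a * k + b) * f k * dowlingTriangle a b j k) :=
        sum_congr rfl fun k _ => by rw [dowlingTriangle]; ring
    _ = ∑ k ∈ range (N + 1), (((k : R) + 1) * f (k + 1) * dowlingTriangle a b j k +
          (a * k + b) * f k * dowlingTriangle a b j k) := by
        rw [sum_add_distrib, hshift, sum_add_distrib]
    _ = _ := sum_congr rfl fun k _ => by ring

theorem sum_range_eval_dowlingDualPoly_mul_dowlingTriangle_of_add_lt {i j N : ℕ}
    (h : i + j < N) :
    ∑ k ∈ range N, (dowlingDualPoly a b i).eval (k : R) * dowlingTriangle a b j k =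
      dowlingRowSum a b (i + j) := by
  induction i generalizing j with
  | zero => simpa [dowlingDualPoly] using sum_range_dowlingTriangle_of_lt a b h
  | succ i ih =>
    obtain ⟨N, rfl⟩ : ∃ N', N = N' + 1 := ⟨N - 1, by omega⟩
    rw [show i + 1 + j = i + (j + 1) by ring, ← ih (by omega),
      sum_range_succ_mul_dowlingTriangle_succ a b _ (by omega : j < N)]
    simp only [eval_dowlingDualPoly_succ, Nat.cast_add, Nat.cast_one]

theorem sum_range_eval_dowlingDualPoly_mul_dowlingTriangle {i j N : ℕ} (h : j < N) :
    ∑ k ∈ range N, (dowlingDualPoly a b i).eval (k : R) * dowlingTriangle a b j k =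
      dowlingRowSum a b (i + j) := by
  rw [← sum_range_eval_dowlingDualPoly_mul_dowlingTriangle_of_add_lt a b
    (by omega : i + j < N + i)]
  refine sum_subset (range_subset_range.2 (by omega)) fun k _ hk => ?_
  rw [dowlingTriangle_eq_zero_of_lt a b (by simp at hk; omega), mul_zero]

theorem det_hankel_dowlingRowSum (n : ℕ) :
    (Matrix.of fun i j : Fin (n + 1) => dowlingRowSum a b ((i : ℕ) + j)).det =
      (a + 1) ^ (n + 1).choose 2 * ∏ k ∈ range (n + 1), (k ! : R) ^ 2 := by
  have hfactor : (Matrix.of fun i j : Fin (n + 1) => dowlingRowSum a b ((i : ℕ) + j)) =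
      (Matrix.of fun i k : Fin (n + 1) => dowlingTriangle a b i k) *
        Matrix.of fun k j : Fin (n + 1) => (dowlingDualPoly a b j).eval ((k : ℕ) : R) := by
    ext i j
    simp only [Matrix.mul_apply, Matrix.of_apply]
    rw [add_comm, ← sum_range_eval_dowlingDualPoly_mul_dowlingTriangle a b i.2]
    simp only [mul_comm (dowlingTriangle a b _ _)]
    exact (Fin.sum_univ_eq_sum_range
      (fun k => (dowlingDualPoly a b j).eval (k : R) * dowlingTriangle a b i k) _).symm
  have htriangle : (Matrix.of fun i k : Fin (n + 1) => dowlingTriangle a b i k).det =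
      ∏ k ∈ range (n + 1), (k ! : R) := by
    rw [Matrix.det_of_isLowerTriangular
      (Matrix.of fun i k : Fin (n + 1) => dowlingTriangle a b i k)
      fun i k hik => dowlingTriangle_eq_zero_of_lt a b (show (i : ℕ) < k from hik)]
    simpa [dowlingTriangle_self] using Fin.prod_univ_eq_prod_range (fun k => (k ! : R)) (n + 1)
  have hdual :
      (Matrix.of fun k j : Fin (n + 1) => (dowlingDualPoly a b j).eval ((k : ℕ) : R)).det =
      (∏ k ∈ range (n + 1), (k ! : R)) * (a + 1) ^ (n + 1).choose 2 := by
    rw [Matrix.det_eval_matrixOfPolynomials_eq_det_vandermonde_mul _ _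
        fun i => natDegree_dowlingDualPoly_le a b i,
      Matrix.det_vandermonde_id_eq_superFactorial, ← Nat.prod_range_succ_factorial,
      Nat.cast_prod]
    simp only [coeff_dowlingDualPoly_self, Fin.prod_pow_val_eq_pow_choose_two]
  rw [hfactor, Matrix.det_mul, htriangle, hdual]
  simp only [sq, prod_mul_distrib]
  ring

end DowlingTriangle

noncomputable def whitneyAltSum (m n k : ℕ) : ℝ :=
  ∑ i ∈ range (k + 1), (-1 : ℝ) ^ (k - i) * (k.choose i) * ((m : ℝ) * i + 1) ^ n

theorem whitney2_eq_div (m n k : ℕ) : whitney2 m n k = whitneyAltSum m n k / (m ^ k * k !) :=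
  one_div_mul_eq_div _ _

theorem whitneyAltSum_zero_left {m k : ℕ} (hk : 0 < k) : whitneyAltSum m 0 k = 0 := by
  have h := add_pow (1 : ℝ) (-1) k
  rw [add_neg_cancel, zero_pow hk.ne'] at h
  simp only [whitneyAltSum, pow_zero, mul_one, h, one_pow, one_mul]

theorem whitneyAltSum_succ_succ (m n k : ℕ) :
    whitneyAltSum m (n + 1) (k + 1) =
      ((m : ℝ) * (k + 1) + 1) * whitneyAltSum m n (k + 1) +
        m * (k + 1) * whitneyAltSum m n k := by
  have hterm : ∀ i ∈ range (k + 2),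
      (-1 : ℝ) ^ (k + 1 - i) * ((k + 1).choose i) * ((m : ℝ) * i + 1) ^ (n + 1) =
        ((m : ℝ) * (k + 1) + 1) *
            ((-1 : ℝ) ^ (k + 1 - i) * ((k + 1).choose i) * ((m : ℝ) * i + 1) ^ n) +
          m * (k + 1) * ((-1 : ℝ) ^ (k - i) * (k.choose i) * ((m : ℝ) * i + 1) ^ n) := by
    intro i hi
    rcases Nat.lt_or_eq_of_le (Nat.lt_succ_iff.mp (mem_range.mp hi)) with hik | rfl
    · -- write `m i + 1 = (m (k + 1) + 1) - m (k + 1 - i)`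
      have hchoose :
          ((k + 1).choose i : ℝ) * ((k : ℝ) + 1 - i) = (k.choose i) * ((k : ℝ) + 1) := by
        have hsub : ((k + 1 - i : ℕ) : ℝ) = k + 1 - i := by
          push_cast [Nat.cast_sub hik.le]
          ring
        rw [← hsub]
        exact_mod_cast (Nat.choose_mul_succ_eq k i).symm
      rw [show k + 1 - i = k - i + 1 by omega, pow_succ]
      linear_combination (m : ℝ) * (-1) ^ (k - i) * ((m : ℝ) * i + 1) ^ n * hchoose
    · rw [Nat.sub_self, Nat.choose_self, Nat.choose_succ_self]
      push_cast
      ring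
  rw [whitneyAltSum, sum_congr rfl hterm, sum_add_distrib, ← mul_sum, ← mul_sum,
    sum_range_succ (fun i => (-1 : ℝ) ^ (k - i) * (k.choose i) * ((m : ℝ) * i + 1) ^ n) (k + 1)]
  simp [whitneyAltSum, Nat.choose_succ_self]

theorem whitneyAltSum_eq_zero_of_lt (m : ℕ) {n k : ℕ} (h : n < k) :
    whitneyAltSum m n k = 0 := by
  induction n generalizing k with
  | zero => exact whitneyAltSum_zero_left h
  | succ n ih =>
    obtain ⟨k, rfl⟩ : ∃ k', k = k' + 1 := ⟨k - 1, by omega⟩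
    rw [whitneyAltSum_succ_succ, ih (by omega), ih (by omega)]
    ring

theorem whitney2_zero_right (m n : ℕ) : whitney2 m n 0 = 1 := by
  simp [whitney2_eq_div, whitneyAltSum]

theorem whitney2_eq_zero_of_lt (m : ℕ) {n k : ℕ} (h : n < k) : whitney2 m n k = 0 := by
  rw [whitney2_eq_div, whitneyAltSum_eq_zero_of_lt m h, zero_div]

theorem whitney2_succ_succ {m : ℕ} (hm : m ≠ 0) (n k : ℕ) :
    whitney2 m (n + 1) (k + 1) =
      whitney2 m n k + ((m : ℝ) * (k + 1) + 1) * whitney2 m n (k + 1) := by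
  simp only [whitney2_eq_div, whitneyAltSum_succ_succ, Nat.factorial_succ]
  field_simp
  push_cast
  ring

theorem factorial_mul_whitney2_mul_pow_eq_dowlingTriangle {m : ℕ} (hm : m ≠ 0) (x : ℝ)
    {n k : ℕ} (hk : k ≤ n) :
    k ! * whitney2 m n k * (x - 1) ^ (n - k) = dowlingTriangle (m * (x - 1)) (x - 1) n k := by
  induction n generalizing k with
  | zero =>
    obtain rfl : k = 0 := by omega
    simp [dowlingTriangle, whitney2_zero_right]
  | succ n ih =>
    cases k with
    | zero =>
      simp only [dowlingTriangle, ← ih (Nat.zero_le n), whitney2_zero_right, factorial_zero,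
        Nat.sub_zero, Nat.cast_zero]
      ring
    | succ k =>
      have hnext : (x - 1) * dowlingTriangle (m * (x - 1)) (x - 1) n (k + 1) =
          (k + 1)! * whitney2 m n (k + 1) * (x - 1) ^ (n - k) := by
        rcases Nat.lt_or_eq_of_le (Nat.le_of_succ_le_succ hk) with hkn | rfl
        · rw [← ih hkn, show n - k = n - (k + 1) + 1 by omega, pow_succ]
          ring
        · rw [dowlingTriangle_eq_zero_of_lt _ _ (Nat.lt_succ_self k),
            whitney2_eq_zero_of_lt m (Nat.lt_succ_self k)]
          ring
      rw [dowlingTriangle, Nat.add_sub_cancel, ← ih (by omega), Nat.add_sub_add_right,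
        whitney2_succ_succ hm, Nat.factorial_succ]
      rw [Nat.factorial_succ] at hnext
      push_cast at hnext ⊢
      linear_combination (-((m : ℝ) * (k + 1) + 1)) * hnext

theorem eulerianDowling_eq_dowlingRowSum {m : ℕ} (hm : m ≠ 0) (n : ℕ) (x : ℝ) :
    eulerianDowling m n x = dowlingRowSum (m * (x - 1)) (x - 1) n :=
  sum_congr rfl fun _ hk =>
    factorial_mul_whitney2_mul_pow_eq_dowlingTriangle hm x (Nat.lt_succ_iff.mp (mem_range.mp hk))

/-- The Hankel determinant of the Eulerian–Dowling polynomials is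
`(m(x−1)+1)^{C(n+1,2)} ∏_{k=0}^n (k!)²`. -/
theorem eulerianDowling_hankel (m : ℕ) (hm : 0 < m) (x : ℝ) (n : ℕ) :
    Matrix.det (Matrix.of fun i j : Fin (n + 1) => eulerianDowling m ((i : ℕ) + (j : ℕ)) x) =
      ((m : ℝ) * (x - 1) + 1) ^ ((n + 1).choose 2) *
        ∏ k ∈ Finset.range (n + 1), (k.factorial : ℝ) ^ 2 := by
  simp only [eulerianDowling_eq_dowlingRowSum hm.ne']
  exact det_hankel_dowlingRowSum _ _ n
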